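/- arXiv:2207.11126 — 2 statements merged into one kernel-verified Lean document; each statement's English description precedes it below -/
import Mathlib

section
/- Let f, f⋆ ∈ [0,1] and let R be a random variable with values in [0,1] and E[R] = f⋆. Define Y = (f − R)² − (f⋆ − R)². Then Var[Y] ≤ 4 E[Y]. -/
/-! `Y = (f - f⋆)(f + f⋆ - 2R)` is affine in `R`. Hence
`E[Y] = (f - f⋆)²`, and `Var[Y] = 4 (f - f⋆)² Var[R] ≤ (f - f⋆)²` by Popoviciu's inequality
`Var[R] ≤ 1/4`. -/

open MeasureTheory ProbabilityTheory

lemma sub_sq_sub_sub_sq (f g r : ℝ) : (f - r) ^ 2 - (g - r) ^ 2 = (f - g) * (f + g - 2 * r) := by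
  ring

section ExcessLoss

variable {Ω : Type*} [MeasurableSpace Ω] {μ : Measure Ω} [IsProbabilityMeasure μ] {R : Ω → ℝ}

lemma integral_sub_sq_sub_sub_sq (hR : Integrable R μ) (f : ℝ) :
    ∫ ω, ((f - R ω) ^ 2 - (μ[R] - R ω) ^ 2) ∂μ = (f - μ[R]) ^ 2 := by
  simp_rw [sub_sq_sub_sub_sq]
  rw [integral_const_mul, integral_sub (integrable_const _) (hR.const_mul 2), integral_const,
    integral_const_mul]
  simp only [probReal_univ, one_smul]
  ring

lemma variance_sub_sq_sub_sub_sq (hR : AEStronglyMeasurable R μ) (f g : ℝ) :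
    Var[fun ω ↦ (f - R ω) ^ 2 - (g - R ω) ^ 2; μ] = 4 * (f - g) ^ 2 * Var[R; μ] := by
  simp_rw [sub_sq_sub_sub_sq]
  rw [variance_const_mul, variance_const_sub (hR.const_mul 2), variance_const_mul]
  ring

end ExcessLoss

theorem stmt2_general {Ω : Type*} [MeasurableSpace Ω] (μ : Measure Ω) [IsProbabilityMeasure μ]
    (f fstar : ℝ)
    (R : Ω → ℝ) (hRmeas : Measurable R)
    (hR : ∀ ω, R ω ∈ Set.Icc (0:ℝ) 1)
    (hmean : ∫ ω, R ω ∂μ = fstar) :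
    ProbabilityTheory.variance (fun ω => (f - R ω) ^ 2 - (fstar - R ω) ^ 2) μ
      ≤ 4 * ∫ ω, ((f - R ω) ^ 2 - (fstar - R ω) ^ 2) ∂μ := by
  have hRint : Integrable R μ :=
    (memLp_of_bounded (ae_of_all μ hR) hRmeas.aestronglyMeasurable 1).integrable le_rfl
  have hVarR : Var[R; μ] ≤ 1 / 4 :=
    (variance_le_sq_of_bounded (ae_of_all μ hR) hRmeas.aemeasurable).trans_eq (by norm_num)
  subst hmean
  rw [variance_sub_sq_sub_sub_sq hRmeas.aestronglyMeasurable, integral_sub_sq_sub_sub_sq hRint]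
  nlinarith [sq_nonneg (f - μ[R])]

theorem stmt2 {Ω : Type*} [MeasurableSpace Ω] (μ : Measure Ω) [IsProbabilityMeasure μ]
    (f fstar : ℝ) (hf : f ∈ Set.Icc (0:ℝ) 1) (hfstar : fstar ∈ Set.Icc (0:ℝ) 1)
    (R : Ω → ℝ) (hRmeas : Measurable R)
    (hR : ∀ ω, R ω ∈ Set.Icc (0:ℝ) 1)
    (hmean : ∫ ω, R ω ∂μ = fstar) :
    ProbabilityTheory.variance (fun ω => (f - R ω) ^ 2 - (fstar - R ω) ^ 2) μ
      ≤ 4 * ∫ ω, ((f - R ω) ^ 2 - (fstar - R ω) ^ 2) ∂μ :=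
  stmt2_general μ f fstar R hRmeas hR hmean
end

section
/- Let S be a finite set with |S| = n, and p, q : S → [0,1] probability vectors. For s sampled from p, define Y = ∑_{s'∈S} ((q(s') − 1[s' = s])² − (p(s') − 1[s' = s])²). Then Y² ≤ 4 n ∑_{s'∈S} (q(s') − p(s'))², and consequently Var[Y] ≤ 4 n E[Y]. -/
theorem stmt5 {S : Type*} [Fintype S] [DecidableEq S]
    (n : ℕ) (hn : Fintype.card S = n)
    (p q : S → ℝ)
    (hp0 : ∀ s, p s ∈ Set.Icc (0:ℝ) 1) (hq0 : ∀ s, q s ∈ Set.Icc (0:ℝ) 1)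
    (hp1 : ∑ s, p s = 1) (hq1 : ∑ s, q s = 1)
    (Y : S → ℝ)
    (hY : ∀ s, Y s = ∑ s', ((q s' - if s' = s then 1 else 0) ^ 2
        - (p s' - if s' = s then 1 else 0) ^ 2)) :
    (∀ s, (Y s) ^ 2 ≤ 4 * n * ∑ s', (q s' - p s') ^ 2) ∧
    (∑ s, p s * (Y s - ∑ s₂, p s₂ * Y s₂) ^ 2 ≤ 4 * n * ∑ s, p s * Y s) := by
  set E : ℝ := ∑ s', (q s' - p s') ^ 2 with hE
  have hbound : ∀ s, (Y s) ^ 2 ≤ 4 * n * E := by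
    intro s
    have h1 : Y s = ∑ s', (q s' + p s' - 2 * (if s' = s then 1 else 0)) * (q s' - p s') := by
      rw [hY]; exact Finset.sum_congr rfl fun s' _ => by ring
    have h2 := Finset.sum_mul_sq_le_sq_mul_sq Finset.univ
      (fun s' => q s' + p s' - 2 * (if s' = s then 1 else 0)) (fun s' => q s' - p s')
    have h3 : ∑ s', (q s' + p s' - 2 * (if s' = s then 1 else 0)) ^ 2 ≤ (4 * n : ℝ) := by
      calc ∑ s', (q s' + p s' - 2 * (if s' = s then 1 else 0)) ^ 2
          ≤ ∑ _s' : S, (4:ℝ) := by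
            apply Finset.sum_le_sum
            intro s' _
            obtain ⟨hp, hp'⟩ := hp0 s'
            obtain ⟨hq, hq'⟩ := hq0 s'
            split_ifs <;> nlinarith
        _ = 4 * n := by simp [hn]; ring
    have hEnn : 0 ≤ E := Finset.sum_nonneg fun _ _ => sq_nonneg _
    calc (Y s) ^ 2 = (∑ s', (q s' + p s' - 2 * (if s' = s then 1 else 0)) * (q s' - p s')) ^ 2 := by
          rw [h1]
      _ ≤ (∑ s', (q s' + p s' - 2 * (if s' = s then 1 else 0)) ^ 2) * E := h2
      _ ≤ (4 * n) * E := by apply mul_le_mul_of_nonneg_right h3 hEnn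
  refine ⟨hbound, ?_⟩
  have hYs : ∀ s, Y s = (∑ s', (q s' ^ 2 - p s' ^ 2)) - 2 * (q s - p s) := by
    intro s
    rw [hY]
    have : ∀ s' : S, (q s' - if s' = s then 1 else 0) ^ 2 - (p s' - if s' = s then 1 else 0) ^ 2
        = (q s' ^ 2 - p s' ^ 2) - (if s' = s then 2 * (q s' - p s') else 0) := by
      intro s'; split_ifs <;> ring
    rw [Finset.sum_congr rfl fun s' _ => this s', Finset.sum_sub_distrib,
      Finset.sum_ite_eq' Finset.univ s (fun s' => 2 * (q s' - p s'))]
    simp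
  have hEY : ∑ s, p s * Y s = E := by
    have h1 : ∑ s, p s * Y s
        = ∑ s, (p s * (∑ s', (q s' ^ 2 - p s' ^ 2)) - 2 * (p s * q s - p s ^ 2)) := by
      exact Finset.sum_congr rfl fun s _ => by rw [hYs s]; ring
    rw [h1]
    rw [Finset.sum_sub_distrib, ← Finset.sum_mul, hp1, one_mul, ← Finset.mul_sum,
      Finset.sum_sub_distrib, Finset.sum_sub_distrib, hE]
    have : ∑ s, (q s - p s) ^ 2 = ∑ s, (q s ^ 2 - 2 * (p s * q s) + p s ^ 2) :=
      Finset.sum_congr rfl fun s _ => by ring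
    rw [this, Finset.sum_add_distrib, Finset.sum_sub_distrib, ← Finset.mul_sum]
    ring
  set μ : ℝ := ∑ s₂, p s₂ * Y s₂ with hμ
  have hvar : ∑ s, p s * (Y s - μ) ^ 2 = (∑ s, p s * (Y s) ^ 2) - μ ^ 2 := by
    have h1 : ∑ s, p s * (Y s - μ) ^ 2
        = ∑ s, (p s * (Y s) ^ 2 - 2 * μ * (p s * Y s) + μ ^ 2 * p s) := by
      exact Finset.sum_congr rfl fun s _ => by ring
    rw [h1, Finset.sum_add_distrib, Finset.sum_sub_distrib, ← Finset.mul_sum, ← Finset.mul_sum,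
      hp1, ← hμ]
    ring
  have h2 : ∑ s, p s * (Y s) ^ 2 ≤ 4 * n * μ := by
    calc ∑ s, p s * (Y s) ^ 2 ≤ ∑ s, p s * (4 * n * E) := by
          apply Finset.sum_le_sum
          intro s _
          exact mul_le_mul_of_nonneg_left (hbound s) (hp0 s).1
      _ = 4 * n * μ := by rw [← Finset.sum_mul, hp1, one_mul, hEY]
  have := sq_nonneg μ
  rw [hvar]
  linarith
end
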